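/- arXiv:1507.08334 — 3 statements merged into one kernel-verified Lean document; each statement's English description precedes it below -/
import Mathlib

section
/- Let M be a closed subspace of L² that is invariant under multiplication by z⁻¹ (i.e., z⁻¹M ⊆ M) but not invariant under multiplication by z. Then there exists a unimodular function q (|q| = 1 a.e. on 𝕋) such that M = qH₂⁻ := {q·h : h ∈ H₂⁻}. -/
open MeasureTheory Complex Real Filter ComplexConjugate

noncomputable section

instance : Fact (0 < 2 * Real.pi) := ⟨by positivity⟩

/-- The unit circle, realized as `ℝ / 2πℤ`. -/
abbrev UC := AddCircle (2 * Real.pi)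

/-- Normalized arc-length (Haar probability) measure on the circle. -/
abbrev μc : Measure UC := AddCircle.haarAddCircle

/-- The Lebesgue space L² of the circle. -/
abbrev L2 := Lp ℂ 2 μc

/-- The Hardy space H² viewed inside L²: vanishing negative Fourier coefficients. -/
def H2set : Set L2 := {f | ∀ n : ℤ, n < 0 → fourierCoeff (⇑f) n = 0}

/-- The space H₂⁻: vanishing positive Fourier coefficients. -/
def H2negSet : Set L2 := {f | ∀ n : ℤ, 0 < n → fourierCoeff (⇑f) n = 0}

/-- The orthogonal complement H²^⊥ of H² in L²: vanishing coefficients for n ≥ 0. -/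
def HperpSet : Set L2 := {f | ∀ n : ℤ, 0 ≤ n → fourierCoeff (⇑f) n = 0}

/-- A function belongs to the Hardy space H²: square-integrable with vanishing
negative Fourier coefficients. -/
def MemH2 (f : UC → ℂ) : Prop :=
  MemLp f 2 μc ∧ ∀ n : ℤ, n < 0 → fourierCoeff f n = 0

/-- A unimodular function on the circle. -/
def Unimodular (q : UC → ℂ) : Prop :=
  AEStronglyMeasurable q μc ∧ ∀ᵐ x ∂μc, ‖q x‖ = 1

/-- An inner function: member of H² with unit modulus a.e. on the circle. -/
def IsInner (φ : UC → ℂ) : Prop :=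
  MemH2 φ ∧ ∀ᵐ x ∂μc, ‖φ x‖ = 1

/-- The backward shift U⋆, acting on boundary functions:
`(U⋆ f)(z) = (f(z) - f̂(0))/z`. -/
def bwShift (f : UC → ℂ) : UC → ℂ :=
  fun x => fourier (-1) x * (f x - fourierCoeff f 0)

/-- `f ∈ H²` is cyclic for the backward shift: the closed linear span of the
backward-shift orbit `{U⋆ⁿ f : n ≥ 0}` is all of H². -/
def CyclicBw (f : UC → ℂ) : Prop :=
  closure ((Submodule.span ℂ {u : L2 | ∃ n : ℕ, ⇑u =ᵐ[μc] bwShift^[n] f} : Submodule ℂ L2) : Set L2)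
    = H2set

/-- The subspace qH₂⁻ = {q·h : h ∈ H₂⁻} of L². -/
def qH2neg (q : UC → ℂ) : Set L2 :=
  {u | ∃ h : L2, h ∈ H2negSet ∧ ⇑u =ᵐ[μc] fun x => q x * (⇑h) x}

/-! `M₁ := z⁻¹M` is a closed subspace of `M`, and a proper one because `zM ⊄ M`; take a unit
vector `q ∈ M ⊖ M₁`. For `n < 0` we have `zⁿq ∈ M₁ ⊥ q`, so `|q|²` has the Fourier coefficients
of the constant `1`, and `q` is unimodular. Since `zⁿq ∈ M` for `n ≤ 0`, closedness gives
`qH₂⁻ ⊆ M`. Conversely, if `g ∈ M` is orthogonal to `qH₂⁻`, then every Fourier coefficient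
`⟪zⁿq, g⟫` of `q̄g` vanishes (for `n > 0` because `z⁻ⁿg ∈ M₁`), so `g = 0`. -/

open scoped InnerProductSpace ENNReal NNReal BoundedContinuousFunction

theorem ae_eq_zero_of_forall_integral_smul_eq_zero {X E : Type*} [PseudoMetricSpace X]
    [MeasurableSpace X] [BorelSpace X] [NormedAddCommGroup E] [NormedSpace ℝ E] [CompleteSpace E]
    {μ : Measure X} {f : X → E} (hf : Integrable f μ)
    (h : ∀ g : X →ᵇ ℝ≥0, ∫ x, (g x : ℝ) • f x ∂μ = 0) : f =ᵐ[μ] 0 := by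
  refine ae_eq_zero_of_forall_setIntegral_isClosed_eq_zero hf fun F hF => ?_
  have hδ : ∀ n : ℕ, (0 : ℝ) < 1 / (n + 1) := fun n => Nat.one_div_pos_of_nat
  have hlim := thickenedIndicator_tendsto_indicator_closure hδ
    tendsto_one_div_add_atTop_nhds_zero_nat F
  rw [hF.closure_eq, tendsto_pi_nhds] at hlim
  have hdom := tendsto_integral_of_dominated_convergence (μ := μ)
    (F := fun n x => (thickenedIndicator (hδ n) F x : ℝ) • f x) (fun x => ‖f x‖)
    (fun n => ((NNReal.continuous_coe.comp (thickenedIndicator (hδ n) F).continuous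
      ).aestronglyMeasurable).smul hf.aestronglyMeasurable) hf.norm
    (fun n => ae_of_all _ fun x => by
      rw [norm_smul, Real.norm_of_nonneg NNReal.zero_le_coe]
      exact mul_le_of_le_one_left (norm_nonneg _)
        (NNReal.coe_le_one.mpr (thickenedIndicator_le_one _ F x)))
    (ae_of_all _ fun x => ((NNReal.continuous_coe.tendsto _).comp (hlim x)).smul_const (f x))
  simp only [h] at hdom
  rw [← integral_indicator hF.measurableSet]
  convert tendsto_nhds_unique hdom tendsto_const_nhds using 3 with x
  by_cases hx : x ∈ F <;> simp [hx]

section IntegralAgainstContinuous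

variable {X : Type*} [TopologicalSpace X] [CompactSpace X] [MeasurableSpace X]
  [OpensMeasurableSpace X] {μ : Measure X} {w : X → ℂ}

theorem MeasureTheory.Integrable.continuousMap_mul (hw : Integrable w μ) (g : C(X, ℂ)) :
    Integrable (fun x => g x * w x) μ :=
  hw.bdd_mul g.continuous.aestronglyMeasurable (ae_of_all _ g.norm_coe_le_norm)

def integralMulCLM (hw : Integrable w μ) : C(X, ℂ) →L[ℂ] ℂ :=
  LinearMap.mkContinuous
    { toFun := fun g => ∫ x, g x * w x ∂μ
      map_add' := fun g g' => by
        simp only [ContinuousMap.add_apply, add_mul]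
        exact integral_add (hw.continuousMap_mul g) (hw.continuousMap_mul g')
      map_smul' := fun c g => by
        simp only [ContinuousMap.smul_apply, smul_eq_mul, mul_assoc, RingHom.id_apply]
        exact integral_const_mul c _ }
    (∫ x, ‖w x‖ ∂μ) fun g => by
      calc ‖∫ x, g x * w x ∂μ‖ ≤ ∫ x, ‖g‖ * ‖w x‖ ∂μ :=
            norm_integral_le_of_norm_le (hw.norm.const_mul _) (ae_of_all _ fun x => by
              rw [norm_mul]
              exact mul_le_mul_of_nonneg_right (g.norm_coe_le_norm x) (norm_nonneg _))
        _ = (∫ x, ‖w x‖ ∂μ) * ‖g‖ := by rw [integral_const_mul, mul_comm]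

end IntegralAgainstContinuous

theorem ae_eq_of_fourierCoeff_eq {T : ℝ} [Fact (0 < T)] {f g : AddCircle T → ℂ}
    (hf : Integrable f AddCircle.haarAddCircle) (hg : Integrable g AddCircle.haarAddCircle)
    (h : fourierCoeff f = fourierCoeff g) : f =ᵐ[AddCircle.haarAddCircle] g := by
  have hfg := hf.sub hg
  have hΦ : integralMulCLM hfg = 0 := by
    refine ContinuousLinearMap.ext_on
      ((Submodule.dense_iff_topologicalClosure_eq_top).mpr span_fourier_closure_eq_top) ?_
    rintro _ ⟨n, rfl⟩
    have := congrFun h (-n)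
    simp only [fourierCoeff, neg_neg, smul_eq_mul] at this
    change ∫ x, fourier n x * (f - g) x ∂_ = 0
    simp only [Pi.sub_apply, mul_sub]
    rw [integral_sub (hf.continuousMap_mul _) (hg.continuousMap_mul _), this, sub_self]
  rw [← sub_ae_eq_zero]
  refine ae_eq_zero_of_forall_integral_smul_eq_zero hfg fun φ => ?_
  have := congrArg (· ⟨fun x => (φ x : ℂ), by fun_prop⟩) hΦ
  simpa [integralMulCLM, Complex.real_smul] using this

section MulUnimodular

variable {α : Type*} [MeasurableSpace α] {μ : Measure α} {p : ℝ≥0∞} {q : α → ℂ}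

theorem memLp_mul_of_ae_norm_eq_one (hq : AEStronglyMeasurable q μ)
    (hq1 : ∀ᵐ x ∂μ, ‖q x‖ = 1) (f : Lp ℂ p μ) : MemLp (fun x => q x * f x) p μ :=
  (Lp.memLp f).of_le (hq.mul (Lp.aestronglyMeasurable f)) <| by
    filter_upwards [hq1] with x hx
    simp [hx]

variable (hq : AEStronglyMeasurable q μ) (hq1 : ∀ᵐ x ∂μ, ‖q x‖ = 1)

def mulLp (f : Lp ℂ p μ) : Lp ℂ p μ := (memLp_mul_of_ae_norm_eq_one hq hq1 f).toLp _

theorem coeFn_mulLp (f : Lp ℂ p μ) : mulLp hq hq1 f =ᵐ[μ] fun x => q x * f x :=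
  MemLp.coeFn_toLp _

variable [Fact (1 ≤ p)]

def mulUnimodular : Lp ℂ p μ ≃ₗᵢ[ℂ] Lp ℂ p μ where
  toFun := mulLp hq hq1
  invFun := mulLp (continuous_conj.comp_aestronglyMeasurable hq) (by simpa using hq1)
  map_add' f g := by
    refine Lp.ext ?_
    filter_upwards [coeFn_mulLp hq hq1 (f + g), coeFn_mulLp hq hq1 f, coeFn_mulLp hq hq1 g,
      Lp.coeFn_add f g, Lp.coeFn_add (mulLp hq hq1 f) (mulLp hq hq1 g)] with x h h₁ h₂ h₃ h₄
    simp only [h, h₄, Pi.add_apply, h₁, h₂, h₃, mul_add]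
  map_smul' c f := by
    refine Lp.ext ?_
    filter_upwards [coeFn_mulLp hq hq1 (c • f), coeFn_mulLp hq hq1 f, Lp.coeFn_smul c f,
      Lp.coeFn_smul c (mulLp hq hq1 f)] with x h h₁ h₂ h₃
    simp only [h, h₃, Pi.smul_apply, h₁, h₂, smul_eq_mul, RingHom.id_apply]
    ring
  left_inv f := by
    refine Lp.ext ?_
    filter_upwards [coeFn_mulLp _ _ (mulLp hq hq1 f), coeFn_mulLp hq hq1 f, hq1] with x h h₁ hx
    rw [h, h₁, ← mul_assoc, Complex.conj_mul', hx]
    simp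
  right_inv f := by
    refine Lp.ext ?_
    filter_upwards [coeFn_mulLp hq hq1 _, coeFn_mulLp _ _ f, hq1] with x h h₁ hx
    rw [h, h₁, ← mul_assoc, Complex.mul_conj', hx]
    simp
  norm_map' f := by
    change ‖mulLp hq hq1 f‖ = ‖f‖
    rw [Lp.norm_def, Lp.norm_def, eLpNorm_congr_ae (coeFn_mulLp hq hq1 f)]
    congr 1
    refine eLpNorm_congr_norm_ae ?_
    filter_upwards [hq1] with x hx
    simp [hx]

theorem coeFn_mulUnimodular (f : Lp ℂ p μ) :
    mulUnimodular hq hq1 f =ᵐ[μ] fun x => q x * f x :=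
  coeFn_mulLp hq hq1 f

end MulUnimodular

theorem MeasureTheory.L2.integrable_conj_mul {α : Type*} [MeasurableSpace α] {μ : Measure α}
    (f g : Lp ℂ 2 μ) : Integrable (fun x => conj (f x) * g x) μ :=
  (L2.integrable_inner (𝕜 := ℂ) f g).congr <| ae_of_all _ fun x => by
    simp only [RCLike.inner_apply, mul_comm]

section Orthogonal

variable {𝕜 E : Type*} [RCLike 𝕜] [NormedAddCommGroup E] [InnerProductSpace 𝕜 E]
  {K₁ K₂ : Submodule 𝕜 E} [K₁.HasOrthogonalProjection]

theorem Submodule.eq_of_le_of_orthogonal_inf_eq_bot (h : K₁ ≤ K₂)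
    (h' : K₁ᗮ ⊓ K₂ = ⊥) : K₁ = K₂ := by
  simpa [h'] using Submodule.sup_orthogonal_inf_of_hasOrthogonalProjection h

theorem Submodule.exists_norm_eq_one_mem_orthogonal_inf (h : K₁ < K₂) :
    ∃ v ∈ K₁ᗮ ⊓ K₂, ‖v‖ = 1 := by
  obtain ⟨v, hv, hv0⟩ := (K₁ᗮ ⊓ K₂).ne_bot_iff.mp fun h' =>
    h.ne (eq_of_le_of_orthogonal_inf_eq_bot h.le h')
  exact ⟨(‖v‖⁻¹ : 𝕜) • v, Submodule.smul_mem _ _ hv, norm_smul_inv_norm hv0⟩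

end Orthogonal

theorem fourierCoeff_eq_inner {T : ℝ} [Fact (0 < T)]
    (f : Lp ℂ 2 (AddCircle.haarAddCircle (T := T))) (n : ℤ) :
    fourierCoeff f n = ⟪fourierLp 2 n, f⟫_ℂ := by
  rw [← fourierBasis_repr, HilbertBasis.repr_apply_apply, coe_fourierBasis]

def zpowMul (n : ℤ) : L2 ≃ₗᵢ[ℂ] L2 :=
  mulUnimodular (fourier n).continuous.aestronglyMeasurable
    (ae_of_all _ fun x => by simp [fourier_apply, Circle.norm_coe])

theorem coeFn_zpowMul (n : ℤ) (f : L2) : zpowMul n f =ᵐ[μc] fun x => fourier n x * f x :=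
  coeFn_mulUnimodular _ _ f

theorem zpowMul_zpowMul (m n : ℤ) (f : L2) : zpowMul m (zpowMul n f) = zpowMul (m + n) f := by
  refine Lp.ext ?_
  filter_upwards [coeFn_zpowMul m (zpowMul n f), coeFn_zpowMul n f, coeFn_zpowMul (m + n) f]
    with x h₁ h₂ h₃
  rw [h₁, h₂, h₃, fourier_add, mul_assoc]

theorem zpowMul_zero (f : L2) : zpowMul 0 f = f := by
  refine Lp.ext ?_
  filter_upwards [coeFn_zpowMul 0 f] with x hx
  rw [hx, fourier_zero, one_mul]

theorem inner_zpowMul_left (n : ℤ) (f g : L2) :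
    ⟪zpowMul n f, g⟫_ℂ = fourierCoeff (fun x => conj (f x) * g x) n := by
  rw [L2.inner_def, fourierCoeff]
  refine integral_congr_ae ?_
  filter_upwards [coeFn_zpowMul n f] with x hx
  rw [RCLike.inner_apply, hx, map_mul, ← fourier_neg, smul_eq_mul]
  ring

theorem inner_zpowMul_left_eq_inner_zpowMul_neg_right (n : ℤ) (f g : L2) :
    ⟪zpowMul n f, g⟫_ℂ = ⟪f, zpowMul (-n) g⟫_ℂ := by
  rw [← (zpowMul (-n)).inner_map_map, zpowMul_zpowMul, neg_add_cancel, zpowMul_zero]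

theorem ae_norm_eq_one_of_inner_zpowMul {q : L2} (hq : ‖q‖ = 1)
    (horth : ∀ n ≠ 0, ⟪zpowMul n q, q⟫_ℂ = 0) : ∀ᵐ x ∂μc, ‖q x‖ = 1 := by
  have h := ae_eq_of_fourierCoeff_eq (L2.integrable_conj_mul q q)
    ((fourier 0).continuous.integrable_of_hasCompactSupport (.of_compactSpace _)) ?_
  · filter_upwards [h] with x hx
    rw [fourier_zero, Complex.conj_mul'] at hx
    exact (pow_eq_one_iff_of_nonneg (norm_nonneg _) two_ne_zero).mp (by exact_mod_cast hx)
  · ext n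
    rw [fourierCoeff_fourier, ← inner_zpowMul_left]
    rcases eq_or_ne n 0 with rfl | hn
    · simp [zpowMul_zero, inner_self_eq_norm_sq_to_K, hq]
    · simp [horth n hn, hn]

theorem eq_zero_of_forall_inner_zpowMul_eq_zero {q g : L2} (hq1 : ∀ᵐ x ∂μc, ‖q x‖ = 1)
    (h : ∀ n, ⟪zpowMul n q, g⟫_ℂ = 0) : g = 0 := by
  have h0 := ae_eq_of_fourierCoeff_eq (L2.integrable_conj_mul q g) (integrable_zero _ _ _)
    (funext fun n => by rw [← inner_zpowMul_left, h n]; simp [fourierCoeff])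
  rw [Lp.eq_zero_iff_ae_eq_zero]
  filter_upwards [h0, hq1] with x hx hx1
  have hq0 : conj (q x) ≠ 0 := by simp [← norm_ne_zero_iff, hx1]
  exact (mul_eq_zero.mp hx).resolve_left hq0

def H2neg : Submodule ℂ L2 := (Submodule.span ℂ (fourierLp 2 '' Set.Ioi 0))ᗮ

instance : H2neg.HasOrthogonalProjection := by
  unfold H2neg
  infer_instance

theorem mem_H2neg {f : L2} : f ∈ H2neg ↔ ∀ n : ℤ, 0 < n → fourierCoeff f n = 0 := by
  simp_rw [fourierCoeff_eq_inner]
  refine ⟨fun hf n hn => Submodule.inner_right_of_mem_orthogonal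
    (Submodule.subset_span (Set.mem_image_of_mem _ hn)) hf, fun h => ?_⟩
  have hspan : Submodule.span ℂ (fourierLp 2 '' Set.Ioi 0) ≤ (ℂ ∙ f)ᗮ := by
    rw [Submodule.span_le]
    rintro _ ⟨n, hn, rfl⟩
    exact Submodule.mem_orthogonal_singleton_iff_inner_left.mpr (h n hn)
  exact (Submodule.mem_orthogonal _ f).mpr fun u hu =>
    Submodule.mem_orthogonal_singleton_iff_inner_left.mp (hspan hu)

theorem fourierLp_mem_H2neg {n : ℤ} (hn : n ≤ 0) : fourierLp 2 n ∈ H2neg :=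
  mem_H2neg.mpr fun m hm => by
    rw [fourierCoeff_eq_inner, orthonormal_fourier.2 (by omega)]

theorem H2neg_le_of_fourierLp_mem {N : Submodule ℂ L2} (hN : IsClosed (N : Set L2))
    (h : ∀ n : ℤ, n ≤ 0 → fourierLp 2 n ∈ N) : H2neg ≤ N := by
  intro f hf
  refine hN.mem_of_tendsto (hasSum_fourier_series_L2 f)
    (Eventually.of_forall fun s => N.sum_mem fun n _ => ?_)
  rcases le_or_gt n 0 with hn | hn
  · exact N.smul_mem _ (h n hn)
  · rw [mem_H2neg.mp hf n hn, zero_smul]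
    exact N.zero_mem

section BackwardShiftInvariant

variable {M : Submodule ℂ L2}

/-- `z⁻¹M`, as the preimage of `M` under multiplication by `z`. -/
def zInvSubmodule (M : Submodule ℂ L2) : Submodule ℂ L2 :=
  M.comap (zpowMul 1).toLinearEquiv.toLinearMap

theorem mem_zInvSubmodule {f : L2} : f ∈ zInvSubmodule M ↔ zpowMul 1 f ∈ M := by
  rw [zInvSubmodule, Submodule.mem_comap, LinearEquiv.coe_coe,
    LinearIsometryEquiv.coe_toLinearEquiv]

theorem isClosed_zInvSubmodule (hM : IsClosed (M : Set L2)) :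
    IsClosed (zInvSubmodule M : Set L2) :=
  hM.preimage (zpowMul 1).continuous

theorem zpowMul_mem_of_nonpos (hdown : ∀ f ∈ M, zpowMul (-1) f ∈ M) {n : ℤ} (hn : n ≤ 0)
    {f : L2} (hf : f ∈ M) : zpowMul n f ∈ M := by
  induction n, hn using Int.leInductionDown with
  | base => rwa [zpowMul_zero]
  | pred n _ ih =>
    rw [sub_eq_neg_add, ← zpowMul_zpowMul]
    exact hdown _ ih

theorem zpowMul_mem_zInvSubmodule_of_neg (hdown : ∀ f ∈ M, zpowMul (-1) f ∈ M) {n : ℤ}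
    (hn : n < 0) {f : L2} (hf : f ∈ M) : zpowMul n f ∈ zInvSubmodule M := by
  rw [mem_zInvSubmodule, zpowMul_zpowMul]
  exact zpowMul_mem_of_nonpos hdown (by omega) hf

theorem zInvSubmodule_lt (hdown : ∀ f ∈ M, zpowMul (-1) f ∈ M)
    (hup : ¬ ∀ f ∈ M, zpowMul 1 f ∈ M) : zInvSubmodule M < M := by
  refine lt_of_le_of_ne (fun f hf => ?_) fun h => hup fun f hf => ?_
  · simpa [zpowMul_zpowMul, zpowMul_zero] using hdown _ (mem_zInvSubmodule.mp hf)
  · exact mem_zInvSubmodule.mp (h.ge hf)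

theorem inner_zpowMul_eq_zero_of_pos (hdown : ∀ f ∈ M, zpowMul (-1) f ∈ M) {q g : L2}
    (hq : q ∈ (zInvSubmodule M)ᗮ) (hg : g ∈ M) {n : ℤ} (hn : 0 < n) :
    ⟪zpowMul n q, g⟫_ℂ = 0 := by
  rw [inner_zpowMul_left_eq_inner_zpowMul_neg_right]
  exact Submodule.inner_left_of_mem_orthogonal
    (zpowMul_mem_zInvSubmodule_of_neg hdown (by omega) hg) hq

theorem inner_zpowMul_self_eq_zero (hdown : ∀ f ∈ M, zpowMul (-1) f ∈ M) {q : L2}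
    (hq : q ∈ (zInvSubmodule M)ᗮ ⊓ M) {n : ℤ} (hn : n ≠ 0) :
    ⟪zpowMul n q, q⟫_ℂ = 0 := by
  rcases hn.lt_or_gt with hn | hn
  · exact Submodule.inner_right_of_mem_orthogonal
      (zpowMul_mem_zInvSubmodule_of_neg hdown hn hq.2) hq.1
  · exact inner_zpowMul_eq_zero_of_pos hdown hq.1 hq.2 hn

end BackwardShiftInvariant

theorem mulUnimodular_fourierLp {q : L2} (hq1 : ∀ᵐ x ∂μc, ‖q x‖ = 1) (n : ℤ) :
    mulUnimodular (Lp.aestronglyMeasurable q) hq1 (fourierLp 2 n) = zpowMul n q := by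
  refine Lp.ext ?_
  filter_upwards [coeFn_mulUnimodular (Lp.aestronglyMeasurable q) hq1 (fourierLp 2 n),
    coeFn_zpowMul n q, coeFn_fourierLp 2 n] with x h₁ h₂ h₃
  rw [h₁, h₂, h₃, mul_comm]

theorem coe_map_mulUnimodular_H2neg {q : L2} (hq1 : ∀ᵐ x ∂μc, ‖q x‖ = 1) :
    (H2neg.map (mulUnimodular (Lp.aestronglyMeasurable q) hq1).toLinearEquiv.toLinearMap :
      Set L2) = qH2neg q := by
  ext u
  simp only [SetLike.mem_coe, Submodule.mem_map, LinearEquiv.coe_coe,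
    LinearIsometryEquiv.coe_toLinearEquiv, qH2neg, H2negSet, ← mem_H2neg]
  exact ⟨fun ⟨h, hh, hu⟩ => ⟨h, hh, hu ▸ coeFn_mulUnimodular _ _ h⟩,
    fun ⟨h, hh, hu⟩ => ⟨h, hh, Lp.ext ((coeFn_mulUnimodular _ _ h).trans hu.symm)⟩⟩

theorem eq_map_H2neg_of_mem_orthogonal_inf {M : Submodule ℂ L2} (hM : IsClosed (M : Set L2))
    (hdown : ∀ f ∈ M, zpowMul (-1) f ∈ M) {q : L2}
    (hq : q ∈ (zInvSubmodule M)ᗮ ⊓ M)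
    (hq1 : ∀ᵐ x ∂μc, ‖q x‖ = 1) :
    M = H2neg.map (mulUnimodular (Lp.aestronglyMeasurable q) hq1).toLinearEquiv.toLinearMap := by
  refine (Submodule.eq_of_le_of_orthogonal_inf_eq_bot ?_ ?_).symm
  · refine Submodule.map_le_iff_le_comap.mpr <|
      H2neg_le_of_fourierLp_mem (hM.preimage (LinearIsometryEquiv.continuous _)) fun n hn => ?_
    rw [Submodule.mem_comap, LinearEquiv.coe_coe, LinearIsometryEquiv.coe_toLinearEquiv,
      mulUnimodular_fourierLp]
    exact zpowMul_mem_of_nonpos hdown hn hq.2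
  · refine (Submodule.eq_bot_iff _).mpr fun g hg =>
      eq_zero_of_forall_inner_zpowMul_eq_zero hq1 fun n => ?_
    rcases le_or_gt n 0 with hn | hn
    · rw [← mulUnimodular_fourierLp hq1]
      exact Submodule.inner_right_of_mem_orthogonal
        (Submodule.mem_map_of_mem (fourierLp_mem_H2neg hn)) hg.1
    · exact inner_zpowMul_eq_zero_of_pos hdown hq.1 hg.2 hn

/-- Beurling–Lax type theorem in L²: a closed subspace invariant under multiplication by
`z⁻¹` but not under multiplication by `z` is of the form `qH₂⁻` for a unimodular `q`. -/
theorem stmt1 (M : Submodule ℂ L2) (hclosed : IsClosed (M : Set L2))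
    (hinv : ∀ f ∈ M, ∀ g : L2, (⇑g =ᵐ[μc] fun x => fourier (-1) x * (⇑f) x) → g ∈ M)
    (hnotinv : ¬ (∀ f ∈ M, ∀ g : L2, (⇑g =ᵐ[μc] fun x => fourier 1 x * (⇑f) x) → g ∈ M)) :
    ∃ q : UC → ℂ, Unimodular q ∧ (M : Set L2) = qH2neg q := by
  have hdown : ∀ f ∈ M, zpowMul (-1) f ∈ M := fun f hf => hinv f hf _ (coeFn_zpowMul _ f)
  have hup : ¬ ∀ f ∈ M, zpowMul 1 f ∈ M := fun h => hnotinv fun f hf g hg => by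
    rw [Lp.ext (hg.trans (coeFn_zpowMul 1 f).symm)]
    exact h f hf
  have : CompleteSpace (zInvSubmodule M) := (isClosed_zInvSubmodule hclosed).completeSpace_coe
  obtain ⟨q, hq, hq_norm⟩ :=
    Submodule.exists_norm_eq_one_mem_orthogonal_inf (zInvSubmodule_lt hdown hup)
  have hq1 : ∀ᵐ x ∂μc, ‖q x‖ = 1 :=
    ae_norm_eq_one_of_inner_zpowMul hq_norm fun _ hn => inner_zpowMul_self_eq_zero hdown hq hn
  refine ⟨q, ⟨Lp.aestronglyMeasurable q, hq1⟩, ?_⟩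
  rw [eq_map_H2neg_of_mem_orthogonal_inf hclosed hdown hq hq1, coe_map_mulUnimodular_H2neg]
end
end

section
/- Let g ∈ H² be the function with Fourier coefficients ĝ(n) = 1/(n+1) for n ≥ 0 and ĝ(n) = 0 for n < 0. Then the closed linear span in L² of the set {z^{-k}·g : k ≥ 1} ∪ {z^{-k} : k ≥ 1} (where z^{-k} also denotes the constant-filter translate e^{-ikθ}) equals all of L². In particular, the stochastic process (x_k, y_k) with x_k = Σ_{ℓ≥0} w_{k-ℓ}/(1+ℓ) and y_k = w_k driven by white noise is completely deterministic in the backward time-direction. -/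
/-!
Let `f ∈ L²` be orthogonal to every `z⁻ᵏ` and `z⁻ᵏ g`, `k ≥ 1`. The first family puts `f` in `H²`;
by Parseval the second then says `∑ₘ f̂(m) / (m + k + 1) = 0` for `k ≥ 1`. These sums are the
moments `∫₀¹ tᵏ G(t) dt` of `G(t) = ∑ₘ f̂(m) tᵐ`, which is integrable on `(0, 1)` because
`∑ₘ |f̂(m)| / (m + 1) < ∞` by Cauchy–Schwarz. So every moment of `t G(t)` vanishes, and by
Weierstrass approximation `t G(t) = 0` a.e. on `(0, 1)`. As `G` is analytic on the unit disc, it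
vanishes on `(0, 1)`, hence its coefficients `f̂(m)` vanish by the identity theorem, and `f = 0`.
-/

open MeasureTheory Complex Real Filter ComplexConjugate

noncomputable section

open Set Topology FormalMultilinearSeries AddCircle

section Moments

variable {E : Type*} [NormedAddCommGroup E] [NormedSpace ℝ E] {a b : ℝ} {h : ℝ → E}

lemma integrableOn_Ioo_smul_of_continuous (hh : IntegrableOn h (Ioo a b)) {φ : ℝ → ℝ}
    (hφ : Continuous φ) : IntegrableOn (fun t => φ t • h t) (Ioo a b) :=
  hh.continuousOn_smul_of_subset hφ.continuousOn isCompact_Icc measurableSet_Ioo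
    Ioo_subset_Icc_self

lemma integral_Ioo_polynomial_eval_smul_eq_zero (hh : IntegrableOn h (Ioo a b))
    (hmom : ∀ n : ℕ, ∫ t in Ioo a b, t ^ n • h t = 0) (p : Polynomial ℝ) :
    ∫ t in Ioo a b, p.eval t • h t = 0 := by
  induction p using Polynomial.induction_on' with
  | add p q hp hq =>
    simp_rw [Polynomial.eval_add, add_smul]
    rw [integral_add (integrableOn_Ioo_smul_of_continuous hh p.continuous)
      (integrableOn_Ioo_smul_of_continuous hh q.continuous), hp, hq, add_zero]
  | monomial n c =>
    simp_rw [Polynomial.eval_monomial, mul_smul]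
    rw [integral_smul, hmom, smul_zero]

variable [CompleteSpace E]

theorem ae_restrict_Ioo_eq_zero_of_forall_integral_pow_smul_eq_zero
    (hh : IntegrableOn h (Ioo a b)) (hmom : ∀ n : ℕ, ∫ t in Ioo a b, t ^ n • h t = 0) :
    ∀ᵐ t ∂volume.restrict (Ioo a b), h t = 0 := by
  refine ae_eq_zero_of_integral_contDiff_smul_eq_zero hh.locallyIntegrable
    fun φ hφ _ => norm_le_zero_iff.1 <| le_of_forall_pos_le_add fun ε hε => ?_
  set M := ∫ t in Ioo a b, ‖h t‖
  have hM : 0 ≤ M := integral_nonneg fun _ => norm_nonneg _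
  obtain ⟨p, hp⟩ := exists_polynomial_near_of_continuousOn a b φ hφ.continuous.continuousOn
    (ε / (M + 1)) (by positivity)
  calc ‖∫ t in Ioo a b, φ t • h t‖
      = ‖∫ t in Ioo a b, (φ t - p.eval t) • h t‖ := by
        simp_rw [sub_smul]
        rw [integral_sub (integrableOn_Ioo_smul_of_continuous hh hφ.continuous)
          (integrableOn_Ioo_smul_of_continuous hh p.continuous),
          integral_Ioo_polynomial_eval_smul_eq_zero hh hmom, sub_zero]
    _ ≤ ∫ t in Ioo a b, ε / (M + 1) * ‖h t‖ := by
        refine norm_integral_le_of_norm_le (hh.norm.const_mul _) ?_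
        filter_upwards [ae_restrict_mem measurableSet_Ioo] with t ht
        rw [norm_smul, Real.norm_eq_abs, abs_sub_comm]
        exact mul_le_mul_of_nonneg_right (hp t (Ioo_subset_Icc_self ht)).le (norm_nonneg _)
    _ = ε * (M / (M + 1)) := by rw [integral_const_mul]; ring
    _ ≤ 0 + ε := by
        rw [zero_add]
        exact mul_le_of_le_one_right hε.le ((div_le_one (by positivity)).2 (by linarith))

end Moments

lemma integrable_tsum_of_summable_integral_norm {α E : Type*} [MeasurableSpace α]
    {μ : Measure α} [NormedAddCommGroup E] {ι : Type*} [Countable ι] {F : ι → α → E}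
    (hmeas : AEStronglyMeasurable (fun x => ∑' i, F i x) μ) (hF_int : ∀ i, Integrable (F i) μ)
    (hF_sum : Summable fun i => ∫ x, ‖F i x‖ ∂μ) :
    Integrable (fun x => ∑' i, F i x) μ := by
  refine ⟨hmeas, ?_⟩
  calc ∫⁻ x, ‖∑' i, F i x‖ₑ ∂μ ≤ ∫⁻ x, ∑' i, ‖F i x‖ₑ ∂μ :=
        lintegral_mono fun _ => enorm_tsum_le_tsum_enorm
    _ = ∑' i, ENNReal.ofReal (∫ x, ‖F i x‖ ∂μ) := by
        rw [lintegral_tsum fun i => (hF_int i).1.enorm]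
        exact tsum_congr fun i => (ofReal_integral_norm_eq_lintegral_enorm (hF_int i)).symm
    _ < ⊤ := by
        rw [← ENNReal.ofReal_tsum_of_nonneg (fun i => integral_nonneg fun _ => norm_nonneg _)
          hF_sum]
        exact ENNReal.ofReal_lt_top

section PowerSeries

variable {a : ℕ → ℂ}

lemma summable_norm_div_add_one_of_summable_sq (ha : Summable fun n => ‖a n‖ ^ 2) :
    Summable fun n : ℕ => ‖a n‖ / (n + 1) := by
  have hinv : Summable fun n : ℕ => (1 / ((n : ℝ) + 1)) ^ 2 := by
    simpa [one_div, inv_pow] using (summable_nat_add_iff 1).2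
      (Real.summable_one_div_nat_pow.2 one_lt_two)
  refine ((ha.add hinv).div_const 2).of_nonneg_of_le (fun n => by positivity) fun n => ?_
  have hamgm := two_mul_le_add_sq ‖a n‖ (1 / ((n : ℝ) + 1))
  rw [div_eq_mul_one_div]
  linarith

lemma one_le_radius_ofScalars (ha : Summable fun n => ‖a n‖ / (n + 1)) :
    1 ≤ (ofScalars ℂ a).radius := by
  refine ENNReal.le_of_forall_nnreal_lt fun r hr =>
    (ofScalars ℂ a).le_radius_of_tendsto (l := 0) ?_
  have hr1 : (r : ℝ) < 1 := by exact_mod_cast hr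
  have hlin : Tendsto (fun n : ℕ => ((n : ℝ) + 1) * (r : ℝ) ^ n) atTop (𝓝 0) := by
    simpa [add_mul] using (tendsto_self_mul_const_pow_of_lt_one r.2 hr1).add
      (tendsto_pow_atTop_nhds_zero_of_lt_one r.2 hr1)
  refine (mul_zero (0 : ℝ) ▸ ha.tendsto_atTop_zero.mul hlin).congr fun n => ?_
  rw [ofScalars_norm]
  field_simp

lemma ofScalarsSum_ofReal_eq_tsum (t : ℝ) : ofScalarsSum a (t : ℂ) = ∑' n, a n * (t : ℂ) ^ n :=
  ofScalars_sum_eq a _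

lemma continuousOn_ofScalarsSum_ofReal (ha : Summable fun n => ‖a n‖ / (n + 1)) :
    ContinuousOn (fun t : ℝ => ofScalarsSum a (t : ℂ)) (Ioo (-1) 1) := by
  refine (((ofScalars ℂ a).hasFPowerSeriesOnBall ?_).continuousOn.comp
    Complex.continuous_ofReal.continuousOn fun t ht => ?_)
  · exact zero_lt_one.trans_le (one_le_radius_ofScalars ha)
  · refine lt_of_lt_of_le ?_ (one_le_radius_ofScalars ha)
    rw [edist_zero_right, ← ofReal_norm, Complex.norm_real, Real.norm_eq_abs]
    exact ENNReal.ofReal_lt_one.2 (abs_lt.2 ht)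

lemma eq_zero_of_eventually_ofScalarsSum_ofReal_eq_zero (hr : 0 < (ofScalars ℂ a).radius)
    (h : ∀ᶠ t : ℝ in 𝓝[>] 0, ofScalarsSum a (t : ℂ) = 0) : a = 0 := by
  have hp := ((ofScalars ℂ a).hasFPowerSeriesOnBall hr).hasFPowerSeriesAt
  have hofReal : Tendsto ((↑) : ℝ → ℂ) (𝓝[>] 0) (𝓝[≠] 0) :=
    tendsto_nhdsWithin_iff.2 ⟨(Complex.continuous_ofReal.tendsto' 0 0 (by simp)).mono_left
      nhdsWithin_le_nhds, eventually_nhdsWithin_of_forall fun t ht => by simpa using ht.ne'⟩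
  rw [← ofScalars_series_eq_zero (E := ℂ), ← hp.locally_zero_iff,
    ← hp.analyticAt.frequently_zero_iff_eventually_zero]
  exact hofReal.frequently h.frequently

lemma integral_Ioo_zero_one_pow (m : ℕ) : ∫ t in Ioo (0 : ℝ) 1, t ^ m = 1 / (m + 1) := by
  rw [integral_Ioc_eq_integral_Ioo.symm, ← intervalIntegral.integral_of_le zero_le_one,
    integral_pow]
  simp

lemma integral_Ioo_zero_one_norm_mul_pow (c : ℂ) (m : ℕ) :
    ∫ t in Ioo (0 : ℝ) 1, ‖c * (t : ℂ) ^ m‖ = ‖c‖ / (m + 1) := by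
  rw [setIntegral_congr_fun measurableSet_Ioo fun t ht => by
      rw [norm_mul, norm_pow, Complex.norm_real, Real.norm_of_nonneg ht.1.le],
    integral_const_mul, integral_Ioo_zero_one_pow]
  ring

lemma integral_Ioo_zero_one_mul_pow (c : ℂ) (m : ℕ) :
    ∫ t in Ioo (0 : ℝ) 1, c * (t : ℂ) ^ m = c / (m + 1) := by
  simp_rw [← Complex.ofReal_pow]
  rw [integral_const_mul, integral_complex_ofReal, integral_Ioo_zero_one_pow]
  push_cast
  ring

lemma integrableOn_Ioo_zero_one_mul_pow (c : ℂ) (m : ℕ) :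
    IntegrableOn (fun t : ℝ => c * (t : ℂ) ^ m) (Ioo 0 1) :=
  (by fun_prop : Continuous fun t : ℝ => c * (t : ℂ) ^ m).integrableOn_Icc.mono_set
    Ioo_subset_Icc_self

lemma summable_integral_Ioo_norm_mul_pow_add (ha : Summable fun n => ‖a n‖ / (n + 1)) (k : ℕ) :
    Summable fun n => ∫ t in Ioo (0 : ℝ) 1, ‖a n * (t : ℂ) ^ (n + k)‖ := by
  refine ha.of_nonneg_of_le (fun n => integral_nonneg fun _ => norm_nonneg _) fun n => ?_
  rw [integral_Ioo_zero_one_norm_mul_pow]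
  gcongr
  linarith [(k.cast_nonneg : (0 : ℝ) ≤ k)]

lemma integrableOn_ofScalarsSum_ofReal (ha : Summable fun n => ‖a n‖ / (n + 1)) :
    IntegrableOn (fun t : ℝ => ofScalarsSum a (t : ℂ)) (Ioo 0 1) := by
  have hmeas := ((continuousOn_ofScalarsSum_ofReal ha).mono
    (Ioo_subset_Ioo_left (by norm_num : (-1 : ℝ) ≤ 0))).aestronglyMeasurable (μ := volume)
    measurableSet_Ioo
  simp_rw [ofScalarsSum_ofReal_eq_tsum] at hmeas ⊢
  exact integrable_tsum_of_summable_integral_norm hmeas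
    (fun n => integrableOn_Ioo_zero_one_mul_pow _ _)
    (by simpa using summable_integral_Ioo_norm_mul_pow_add ha 0)

lemma integral_Ioo_pow_smul_ofScalarsSum_ofReal (ha : Summable fun n => ‖a n‖ / (n + 1))
    (k : ℕ) : ∫ t in Ioo (0 : ℝ) 1, t ^ k • ofScalarsSum a (t : ℂ) = ∑' n, a n / (n + k + 1) := by
  have hterm : ∀ t : ℝ, t ^ k • ofScalarsSum a (t : ℂ) = ∑' n, a n * (t : ℂ) ^ (n + k) := by
    intro t
    rw [ofScalarsSum_ofReal_eq_tsum, Complex.real_smul, ← tsum_mul_left]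
    exact tsum_congr fun n => by push_cast; ring
  simp_rw [hterm]
  rw [← integral_tsum_of_summable_integral_norm (fun n => integrableOn_Ioo_zero_one_mul_pow _ _)
    (summable_integral_Ioo_norm_mul_pow_add ha k)]
  exact tsum_congr fun n => by rw [integral_Ioo_zero_one_mul_pow]; push_cast; ring_nf

theorem eq_zero_of_forall_tsum_div_add_eq_zero (ha : Summable fun n => ‖a n‖ / (n + 1))
    (h : ∀ k : ℕ, 1 ≤ k → ∑' n, a n / (n + k + 1) = 0) : a = 0 := by
  set G : ℝ → ℂ := fun t => ofScalarsSum a (t : ℂ)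
  have hG : ContinuousOn G (Ioo 0 1) :=
    (continuousOn_ofScalarsSum_ofReal ha).mono (Ioo_subset_Ioo_left (by norm_num : (-1 : ℝ) ≤ 0))
  have hae : ∀ᵐ t ∂volume.restrict (Ioo 0 1), t • G t = 0 := by
    refine ae_restrict_Ioo_eq_zero_of_forall_integral_pow_smul_eq_zero
      (integrableOn_Ioo_smul_of_continuous (integrableOn_ofScalarsSum_ofReal ha) continuous_id)
      fun n => ?_
    simp_rw [smul_smul, ← pow_succ]
    exact (integral_Ioo_pow_smul_ofScalarsSum_ofReal ha (n + 1)).trans (h (n + 1) (by omega))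
  have hzero : EqOn (fun t => t • G t) 0 (Ioo 0 1) :=
    Measure.eqOn_open_of_ae_eq hae isOpen_Ioo (continuousOn_id.smul hG) continuousOn_const
  refine eq_zero_of_eventually_ofScalarsSum_ofReal_eq_zero
    (zero_lt_one.trans_le (one_le_radius_ofScalars ha)) ?_
  filter_upwards [Ioo_mem_nhdsGT zero_lt_one] with t ht
  exact (smul_eq_zero.1 (hzero ht)).resolve_left ht.1.ne'

end PowerSeries

section Fourier

variable {T : ℝ} [hT : Fact (0 < T)]

lemma fourierCoeff_fourier_smul {E : Type*} [NormedAddCommGroup E] [NormedSpace ℂ E]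
    (f : AddCircle T → E) (n i : ℤ) :
    fourierCoeff (fun x => fourier n x • f x) i = fourierCoeff f (i - n) := by
  refine integral_congr_ae (Eventually.of_forall fun x => ?_)
  simp only [smul_smul, ← fourier_add]
  congr 3
  ring

lemma memLp_fourier_mul {p : ENNReal} {g : AddCircle T → ℂ} (hg : MemLp g p haarAddCircle)
    (n : ℤ) : MemLp (fun x => fourier n x * g x) p haarAddCircle :=
  hg.of_le_mul (c := 1) ((fourier n).continuous.aestronglyMeasurable.mul hg.1)
    (Eventually.of_forall fun x => by simp [Circle.norm_coe])

lemma inner_fourierLp_eq_fourierCoeff (f : Lp ℂ 2 (@haarAddCircle T hT)) (n : ℤ) :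
    inner ℂ (fourierLp 2 n) f = fourierCoeff f n := by
  rw [← fourierBasis_repr, fourierBasis.repr_apply_apply, coe_fourierBasis]

lemma inner_eq_tsum_conj_fourierCoeff_mul (u f : Lp ℂ 2 (@haarAddCircle T hT)) :
    inner ℂ u f = ∑' i, conj (fourierCoeff u i) * fourierCoeff f i := by
  rw [← fourierBasis.tsum_inner_mul_inner u f]
  refine tsum_congr fun i => ?_
  rw [← inner_conj_symm, coe_fourierBasis, inner_fourierLp_eq_fourierCoeff,
    inner_fourierLp_eq_fourierCoeff]

lemma eq_zero_of_fourierCoeff_eq_zero {f : Lp ℂ 2 (@haarAddCircle T hT)}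
    (h : ∀ i, fourierCoeff f i = 0) : f = 0 :=
  (hasSum_fourier_series_L2 f).unique (by simp [h])

lemma summable_norm_fourierCoeff_sq (f : Lp ℂ 2 (@haarAddCircle T hT)) :
    Summable fun m : ℕ => ‖fourierCoeff f m‖ ^ 2 :=
  (hasSum_sq_fourierCoeff f).summable.comp_injective Nat.cast_injective

lemma inner_toLp_fourier_neg_mul_eq_tsum {g : AddCircle T → ℂ} (hg : MemLp g 2 haarAddCircle)
    (k : ℕ) (f : Lp ℂ 2 (@haarAddCircle T hT)) (hf : ∀ i < 0, fourierCoeff f i = 0) :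
    inner ℂ ((memLp_fourier_mul hg (-k)).toLp _) f
      = ∑' m : ℕ, conj (fourierCoeff g (m + k)) * fourierCoeff f m := by
  rw [inner_eq_tsum_conj_fourierCoeff_mul, ← (Nat.cast_injective (R := ℤ)).tsum_eq]
  · refine tsum_congr fun m => ?_
    have hshift := fourierCoeff_fourier_smul g (-k) m
    simp only [smul_eq_mul, sub_neg_eq_add] at hshift
    rw [fourierCoeff_congr_ae (memLp_fourier_mul hg _).coeFn_toLp, hshift]
  · intro i hi
    lift i to ℕ using not_lt.1 fun hneg => hi (by simp [hf i hneg])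
    exact ⟨i, rfl⟩

end Fourier

theorem stmt14_general (g : UC → ℂ) (hm : MemLp g 2 μc)
    (hpos : ∀ n : ℤ, 0 ≤ n → fourierCoeff g n = 1 / ((n : ℂ) + 1)) :
    closure ((Submodule.span ℂ
      ({u : L2 | ∃ k : ℕ, 1 ≤ k ∧ ⇑u =ᵐ[μc] fun x => fourier (-(k : ℤ)) x * g x} ∪
       {u : L2 | ∃ k : ℕ, 1 ≤ k ∧ ⇑u =ᵐ[μc] fun x => (fourier (-(k : ℤ)) x : ℂ)}) :
        Submodule ℂ L2) : Set L2) = Set.univ := by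
  rw [← Submodule.topologicalClosure_coe, Submodule.topologicalClosure_eq_top_iff.2 ?_,
    Submodule.top_coe]
  refine (Submodule.eq_bot_iff _).2 fun f hf => ?_
  have horth := fun u hu => (Submodule.mem_orthogonal _ f).1 hf u (Submodule.subset_span hu)
  have hneg : ∀ i < 0, fourierCoeff f i = 0 := fun i hi => by
    obtain ⟨k, rfl⟩ : ∃ k : ℕ, i = -k := ⟨(-i).toNat, by omega⟩
    rw [← inner_fourierLp_eq_fourierCoeff]
    exact horth _ (Or.inr ⟨k, by omega, coeFn_fourierLp 2 _⟩)
  have hmom : ∀ k : ℕ, 1 ≤ k → ∑' m : ℕ, fourierCoeff f m / (m + k + 1) = 0 := fun k hk => by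
    rw [← horth _ (Or.inl ⟨k, hk, (memLp_fourier_mul hm _).coeFn_toLp⟩),
      inner_toLp_fourier_neg_mul_eq_tsum hm k f hneg]
    refine tsum_congr fun m => ?_
    rw [hpos _ (by positivity)]
    simp [div_eq_mul_inv, mul_comm]
  have hcoeff := eq_zero_of_forall_tsum_div_add_eq_zero
    (summable_norm_div_add_one_of_summable_sq (summable_norm_fourierCoeff_sq f)) hmom
  refine eq_zero_of_fourierCoeff_eq_zero fun i => ?_
  rcases lt_or_ge i 0 with hi | hi
  · exact hneg i hi
  · lift i to ℕ using hi
    exact congrFun hcoeff i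

/-- For `g ∈ H²` with Fourier coefficients `ĝ(n) = 1/(n+1)`, `n ≥ 0`, the closed span of
`{z⁻ᵏ g : k ≥ 1} ∪ {z⁻ᵏ : k ≥ 1}` is all of L²: the associated process is completely
deterministic in the backward time-direction. -/
theorem stmt14 (g : UC → ℂ) (hm : MemLp g 2 μc)
    (hpos : ∀ n : ℤ, 0 ≤ n → fourierCoeff g n = 1 / ((n : ℂ) + 1))
    (hneg : ∀ n : ℤ, n < 0 → fourierCoeff g n = 0) :
    closure ((Submodule.span ℂ
      ({u : L2 | ∃ k : ℕ, 1 ≤ k ∧ ⇑u =ᵐ[μc] fun x => fourier (-(k : ℤ)) x * g x} ∪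
       {u : L2 | ∃ k : ℕ, 1 ≤ k ∧ ⇑u =ᵐ[μc] fun x => (fourier (-(k : ℤ)) x : ℂ)}) :
        Submodule ℂ L2) : Set L2) = Set.univ :=
  stmt14_general g hm hpos
end
end

section
/- Let α be a nonzero complex number and consider f(z) = 1 + αz as an element of L² on the unit circle. The squared L²-distance from f to the closed linear span of the set {z^{-m}·(1+αz) : m ≥ 1} ∪ {z^{-m} : m ≥ 1} equals |α|². (This is the backward one-step prediction — postdiction — error variance for the first component of the moving-average process x_k = w_k + α w_{k-1}, y_k = w_k, and it differs from the forward prediction error 1 when |α| ≠ 1.) -/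
open MeasureTheory Complex Real Filter ComplexConjugate

noncomputable section

/-
Write `eₙ = zⁿ`, an orthonormal family. Then `1 + αz = e₀ + α e₁`, every generator
`z⁻ᵐ = e₋ₘ` and `z⁻ᵐ(1 + αz) = e₋ₘ + α e₁₋ₘ` with `m ≥ 1` is orthogonal to `e₁`, and the span
contains `e₀ = α⁻¹((e₋₁ + α e₀) - e₋₁)`. So `e₀` is the nearest point of the closed span and
the distance is `‖α e₁‖ = |α|`.
-/

section InnerProductSpace

variable {𝕜 E : Type*} [RCLike 𝕜] [NormedAddCommGroup E] [InnerProductSpace 𝕜 E]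

theorem Metric.infDist_add_smul_eq_norm_of_subset_orthogonal {K : Set E} {e y : E} (a : 𝕜)
    (he : ‖e‖ = 1) (hK : K ⊆ (𝕜 ∙ e)ᗮ) (hy : y ∈ K) :
    Metric.infDist (y + a • e) K = ‖a‖ := by
  have hinner : ∀ v ∈ K, inner 𝕜 e (y + a • e - v) = a := fun v hv => by
    rw [inner_sub_right, inner_add_right, inner_smul_right,
      inner_self_eq_norm_sq_to_K (𝕜 := 𝕜), he,
      Submodule.mem_orthogonal_singleton_iff_inner_right.1 (hK hy),
      Submodule.mem_orthogonal_singleton_iff_inner_right.1 (hK hv)]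
    simp
  refine le_antisymm ?_ ((Metric.le_infDist ⟨y, hy⟩).2 fun v hv => ?_)
  · calc Metric.infDist (y + a • e) K ≤ dist (y + a • e) y := Metric.infDist_le_dist_of_mem hy
      _ = ‖a‖ := by rw [dist_eq_norm, add_sub_cancel_left, norm_smul, he, mul_one]
  · calc ‖a‖ = ‖inner 𝕜 e (y + a • e - v)‖ := by rw [hinner v hv]
      _ ≤ ‖e‖ * ‖y + a • e - v‖ := norm_inner_le_norm _ _
      _ = dist (y + a • e) v := by rw [he, one_mul, dist_eq_norm]

end InnerProductSpace

section Fourier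

variable {T : ℝ} [Fact (0 < T)]

theorem coeFn_fourierLp_add_smul (n : ℤ) (α : ℂ) :
    ⇑(fourierLp 2 n + α • fourierLp 2 (n + 1) : Lp ℂ 2 (@AddCircle.haarAddCircle T _))
      =ᵐ[AddCircle.haarAddCircle] fun x => fourier n x * (1 + α * fourier 1 x) := by
  filter_upwards [coeFn_fourierLp (T := T) 2 n, coeFn_fourierLp (T := T) 2 (n + 1),
    Lp.coeFn_add (fourierLp 2 n) (α • fourierLp 2 (n + 1)),
    Lp.coeFn_smul α (fourierLp (T := T) 2 (n + 1))] with x hn hn1 hadd hsmul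
  rw [hadd, Pi.add_apply, hsmul, Pi.smul_apply, hn, hn1, fourier_add, smul_eq_mul]
  ring

end Fourier

/-- Backward one-step (postdiction) error of the moving-average process `x_k = w_k + α w_{k-1}`,
`y_k = w_k`: the squared L²-distance from `1 + αz` to the closed span of
`{z⁻ᵐ(1+αz) : m ≥ 1} ∪ {z⁻ᵐ : m ≥ 1}` equals `|α|²`. -/
theorem stmt16 (α : ℂ) (hα : α ≠ 0) (F : L2)
    (hF : ⇑F =ᵐ[μc] fun x => 1 + α * fourier 1 x) :
    (Metric.infDist F (closure ((Submodule.span ℂ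
      ({u : L2 | ∃ m : ℕ, 1 ≤ m ∧
          ⇑u =ᵐ[μc] fun x => fourier (-(m : ℤ)) x * (1 + α * fourier 1 x)} ∪
       {u : L2 | ∃ m : ℕ, 1 ≤ m ∧ ⇑u =ᵐ[μc] fun x => (fourier (-(m : ℤ)) x : ℂ)}) :
        Submodule ℂ L2) : Set L2))) ^ 2 = ‖α‖ ^ 2 := by
  set S : Set L2 := {u : L2 | ∃ m : ℕ, 1 ≤ m ∧
          ⇑u =ᵐ[μc] fun x => fourier (-(m : ℤ)) x * (1 + α * fourier 1 x)} ∪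
       {u : L2 | ∃ m : ℕ, 1 ≤ m ∧ ⇑u =ᵐ[μc] fun x => (fourier (-(m : ℤ)) x : ℂ)}
  have hFe : F = fourierLp 2 0 + α • fourierLp 2 (0 + 1) := Lp.ext <| hF.trans <| by
    filter_upwards [coeFn_fourierLp_add_smul 0 α] with x hx
    rw [hx, fourier_zero, one_mul]
  have hS : S ⊆ (ℂ ∙ (fourierLp 2 1 : L2))ᗮ := by
    rintro u (⟨m, hm, hu⟩ | ⟨m, hm, hu⟩) <;>
      rw [SetLike.mem_coe, Submodule.mem_orthogonal_singleton_iff_inner_right]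
    · rw [Lp.ext (hu.trans (coeFn_fourierLp_add_smul _ α).symm), inner_add_right,
        inner_smul_right, orthonormal_fourier.inner_eq_zero (by omega),
        orthonormal_fourier.inner_eq_zero (by omega), mul_zero, add_zero]
    · rw [Lp.ext (hu.trans (coeFn_fourierLp 2 _).symm),
        orthonormal_fourier.inner_eq_zero (by omega)]
  have he₀ : (fourierLp 2 0 : L2) ∈ Submodule.span ℂ S := by
    have h₁ : fourierLp 2 (-1) + α • fourierLp 2 (-1 + 1) ∈ Submodule.span ℂ S :=
      Submodule.subset_span (Or.inl ⟨1, le_rfl, coeFn_fourierLp_add_smul (-1) α⟩)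
    have h₂ : (fourierLp 2 (-1) : L2) ∈ Submodule.span ℂ S :=
      Submodule.subset_span (Or.inr ⟨1, le_rfl, coeFn_fourierLp 2 (-1)⟩)
    have := Submodule.smul_mem _ α⁻¹ (Submodule.sub_mem _ h₁ h₂)
    rwa [add_sub_cancel_left, smul_smul, inv_mul_cancel₀ hα, one_smul, neg_add_cancel] at this
  rw [hFe, zero_add,
    Metric.infDist_add_smul_eq_norm_of_subset_orthogonal α (orthonormal_fourier.1 _)
    (closure_minimal (Submodule.span_le.2 hS) (Submodule.isClosed_orthogonal _))
    (subset_closure he₀)]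
end
end
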